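/- Let L be a complete lattice which is separative (for all x,y ∈ L with x ≰ y there exists z with 0 < z ≤ x and z ∧ y = 0), and suppose Cen(L) is a complete atomistic sublattice of L. Then for every x ∈ L, x = ⋁_{u atom of Cen(L)} (x ∧ u), and hence L is totally decomposable. -/

import Mathlib

/-!
A central element `a` with complement `b` splits `L` as `Iic a × Iic b`, and meeting with `a`
commutes with arbitrary joins. Distinct atoms of the centre are disjoint, and an element `z`
disjoint from all of them lies below the meet of their complements, a central element above no
centre atom, hence `⊥` by atomisticity. By separativity, if `x` were not the join of the
`x ⊓ u`, some `0 < z ≤ x` would be disjoint from that join, hence from every `u`, so `z = ⊥`.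
Thus `x ↦ (x ⊓ u)_u` is an isomorphism onto `∏ u, Iic u`, and each factor `Iic u` is
directly indecomposable, because a central element of `Iic u` is central in `L`.
-/

universe u

/-- An element `a` of a lattice is *neutral* if every triple `{a, x, y}`
generates a distributive sublattice; we use the standard equational
characterization. -/
def IsNeutral {L : Type*} [Lattice L] (a : L) : Prop :=
  ∀ x y : L, (a ⊔ x) ⊓ (a ⊔ y) ⊓ (x ⊔ y) = (a ⊓ x) ⊔ (a ⊓ y) ⊔ (x ⊓ y)

/-- An element of a bounded lattice is *central* if it is neutral and complemented. -/
def IsCentral {L : Type*} [Lattice L] [BoundedOrder L] (a : L) : Prop :=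
  IsNeutral a ∧ ∃ b : L, a ⊓ b = ⊥ ∧ a ⊔ b = ⊤

/-- `a` is an atom of the center `Cen L`. -/
def IsCenterAtom {L : Type*} [Lattice L] [BoundedOrder L] (a : L) : Prop :=
  IsCentral a ∧ a ≠ ⊥ ∧ ∀ b : L, IsCentral b → b < a → b = ⊥

/-- A bounded lattice is *directly indecomposable* if whenever it is isomorphic to a
product of two bounded lattices, one of the factors is trivial. -/
def DirectlyIndecomposable (M : Type u) [Lattice M] [BoundedOrder M] : Prop :=
  ∀ A B : BddLat.{u}, Nonempty (M ≃o ↥A × ↥B) → Subsingleton ↥A ∨ Subsingleton ↥B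

/-- A bounded lattice is *totally decomposable* if it is isomorphic to a direct product
of directly indecomposable lattices. -/
def TotallyDecomposable (M : Type u) [Lattice M] [BoundedOrder M] : Prop :=
  ∃ (ι : Type u) (F : ι → BddLat.{u}),
    (∀ i, DirectlyIndecomposable ↥(F i)) ∧ Nonempty (M ≃o ∀ i, ↥(F i))

open Set

section Lattice

variable {L : Type*} [Lattice L]

namespace IsNeutral

variable {a : L}

theorem inf_sup_eq_of_le (hn : IsNeutral a) {p q : L} (hp : p ≤ a) (hq : a ⊓ q ≤ p) :
    a ⊓ (p ⊔ q) = p := by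
  have h := hn p q
  rw [sup_eq_left.2 hp, inf_eq_right.2 hp, inf_eq_left.2 (le_sup_left : a ≤ a ⊔ q)] at h
  rw [h, sup_eq_left.2 hq, sup_eq_left.2 inf_le_left]

theorem sup_inf_eq_of_le (hn : IsNeutral a) {q r : L} (hqr : q ≤ r) (hr : a ⊓ r ≤ q) :
    (a ⊔ q) ⊓ r = q := by
  have h := hn q r
  rw [sup_eq_right.2 hqr, inf_eq_left.2 hqr, inf_assoc,
    inf_eq_right.2 (le_sup_right : r ≤ a ⊔ r)] at h
  rw [h, sup_eq_right.2 (sup_le ((inf_le_inf_left a hqr).trans hr) hr)]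

theorem inf_sup_inf_eq (hn : IsNeutral a) [BoundedOrder L] {b : L} (hab : IsCompl a b)
    (x : L) : x ⊓ a ⊔ x ⊓ b = x := by
  have h := hn x b
  rw [hab.inf_eq_bot, hab.sup_eq_top, inf_top_eq, sup_bot_eq, inf_comm a x] at h
  exact le_antisymm (sup_le inf_le_left inf_le_left) (h ▸ le_inf le_sup_right le_sup_left)

def orderIsoProd [BoundedOrder L] (hn : IsNeutral a) {b : L} (hab : IsCompl a b) :
    L ≃o Iic a × Iic b where
  toFun x := (⟨x ⊓ a, inf_le_right⟩, ⟨x ⊓ b, inf_le_right⟩)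
  invFun p := (p.1 : L) ⊔ p.2
  left_inv := hn.inf_sup_inf_eq hab
  right_inv p := by
    ext
    · show ((p.1 : L) ⊔ p.2) ⊓ a = p.1
      rw [inf_comm]
      exact hn.inf_sup_eq_of_le p.1.2
        ((inf_le_inf_left a p.2.2).trans (hab.inf_eq_bot.trans_le bot_le))
    · show ((p.1 : L) ⊔ p.2) ⊓ b = p.2
      exact le_antisymm
        ((inf_le_inf_right b (sup_le_sup_right p.1.2 _)).trans_eq
          (hn.sup_inf_eq_of_le p.2.2 (hab.inf_eq_bot.trans_le bot_le)))
        (le_inf le_sup_right p.2.2)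
  map_rel_iff' {x y} := by
    refine ⟨fun h => ?_, fun h => ⟨inf_le_inf_right a h, inf_le_inf_right b h⟩⟩
    rw [← hn.inf_sup_inf_eq hab x, ← hn.inf_sup_inf_eq hab y]
    exact sup_le_sup h.1 h.2

theorem map (hn : IsNeutral a) {M : Type*} [Lattice M] (e : L ≃o M) : IsNeutral (e a) := by
  intro x y
  apply e.symm.injective
  simp only [map_inf, map_sup, e.symm_apply_apply, hn (e.symm x) (e.symm y)]

theorem prod {M : Type*} [Lattice M] {c : M} (ha : IsNeutral a) (hc : IsNeutral c) :
    IsNeutral (a, c) :=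
  fun x y => Prod.ext (ha x.1 y.1) (hc x.2 y.2)

end IsNeutral

variable [BoundedOrder L]

theorem isCentral_top : IsCentral (⊤ : L) :=
  ⟨fun x y => by simp, ⊥, inf_bot_eq _, sup_bot_eq _⟩

theorem isCentral_bot : IsCentral (⊥ : L) :=
  ⟨fun x y => by simp, ⊤, bot_inf_eq _, bot_sup_eq _⟩

theorem IsCentral.map {M : Type*} [Lattice M] [BoundedOrder M] {a : L} (ha : IsCentral a)
    (e : L ≃o M) : IsCentral (e a) := by
  obtain ⟨hn, b, hab, hab'⟩ := ha
  exact ⟨hn.map e, e b, by rw [← map_inf, hab, e.map_bot],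
    by rw [← map_sup, hab', e.map_top]⟩

theorem IsCentral.prod {M : Type*} [Lattice M] [BoundedOrder M] {a : L} {c : M}
    (ha : IsCentral a) (hc : IsCentral c) : IsCentral (a, c) := by
  obtain ⟨hna, a', ha, ha'⟩ := ha
  obtain ⟨hnc, c', hc, hc'⟩ := hc
  exact ⟨hna.prod hnc, (a', c'), Prod.ext ha hc, Prod.ext ha' hc'⟩

theorem IsNeutral.isCentral_coe_sup {a b : L} (hn : IsNeutral a) (hab : IsCompl a b)
    {p : Iic a} {q : Iic b} (hp : IsCentral p) (hq : IsCentral q) : IsCentral ((p : L) ⊔ q) :=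
  (hp.prod hq).map (hn.orderIsoProd hab).symm

theorem IsNeutral.isCentral_of_isCompl {a b : L} (hn : IsNeutral a) (hab : IsCompl a b) :
    IsCentral b := by
  simpa using hn.isCentral_coe_sup hab (p := ⊥) (q := ⊤) isCentral_bot isCentral_top

theorem IsCentral.isCentral_coe {a : L} (ha : IsCentral a) {c : Iic a} (hc : IsCentral c) :
    IsCentral (c : L) := by
  obtain ⟨hn, b, hab, hab'⟩ := ha
  simpa using hn.isCentral_coe_sup (.of_eq hab hab') (q := ⊥) hc isCentral_bot

theorem IsCenterAtom.eq_bot_or_eq_top_of_isCentral {u : L} (hu : IsCenterAtom u) {c : Iic u}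
    (hc : IsCentral c) : c = ⊥ ∨ c = ⊤ := by
  rcases (show (c : L) ≤ u from c.2).lt_or_eq with hlt | heq
  · exact .inl (Subtype.ext (hu.2.2 _ (hu.1.isCentral_coe hc) hlt))
  · exact .inr (Subtype.ext heq)

theorem IsCenterAtom.inf_eq_bot {u v : L} (hu : IsCenterAtom u) (hv : IsCenterAtom v)
    (huv : IsCentral (u ⊓ v)) (hne : u ≠ v) : u ⊓ v = ⊥ := by
  refine hu.2.2 _ huv (inf_le_left.lt_of_ne fun h => ?_)
  rcases (h ▸ inf_le_right : u ≤ v).lt_or_eq with hlt | heq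
  · exact hu.2.1 (hv.2.2 u hu.1 hlt)
  · exact hne heq

end Lattice

theorem directlyIndecomposable_of_isCentral {M : Type u} [Lattice M] [BoundedOrder M]
    (hM : ∀ c : M, IsCentral c → c = ⊥ ∨ c = ⊤) : DirectlyIndecomposable M := by
  rintro A B ⟨e⟩
  have hc : IsCentral (e.symm (⊤, ⊥)) := (isCentral_top.prod isCentral_bot).map e.symm
  rcases hM _ hc with h | h
  · left
    have := congrArg Prod.fst (e.symm.injective (h.trans e.symm.map_bot.symm))
    exact subsingleton_of_bot_eq_top this.symm
  · right
    have := congrArg Prod.snd (e.symm.injective (h.trans e.symm.map_top.symm))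
    exact subsingleton_of_bot_eq_top this

section CompleteLattice

variable {L : Type*} [CompleteLattice L]

theorem IsCentral.iSup_inf_eq {a : L} (ha : IsCentral a) {ι : Sort*} (g : ι → L) :
    (⨆ i, g i) ⊓ a = ⨆ i, g i ⊓ a := by
  obtain ⟨hn, b, hab, hab'⟩ := ha
  have hsplit := hn.inf_sup_inf_eq (.of_eq hab hab')
  refine le_antisymm ?_ (le_inf (iSup_mono fun i => inf_le_left) (iSup_le fun i => inf_le_right))
  have hle : (⨆ i, g i) ≤ (⨆ i, g i ⊓ a) ⊔ b := iSup_le fun i =>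
    (hsplit (g i)).symm.le.trans (sup_le_sup (le_iSup (fun i => g i ⊓ a) i) inf_le_right)
  calc (⨆ i, g i) ⊓ a ≤ a ⊓ ((⨆ i, g i ⊓ a) ⊔ b) := by
        rw [inf_comm]; exact inf_le_inf_left a hle
    _ = ⨆ i, g i ⊓ a :=
        hn.inf_sup_eq_of_le (iSup_le fun i => inf_le_right) (hab.trans_le bot_le)

def orderIsoPiOfIsCentral {ι : Type*} (u : ι → L) (hu : ∀ i, IsCentral (u i))
    (hdisj : Pairwise (Function.onFun Disjoint u)) (hsup : ∀ x, ⨆ i, x ⊓ u i = x) :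
    L ≃o ∀ i, Iic (u i) where
  toFun x i := ⟨x ⊓ u i, inf_le_right⟩
  invFun p := ⨆ i, (p i : L)
  left_inv := hsup
  right_inv p := funext fun i => Subtype.ext <| by
    show (⨆ j, (p j : L)) ⊓ u i = p i
    rw [(hu i).iSup_inf_eq]
    refine le_antisymm (iSup_le fun j => ?_) (le_iSup_of_le i (le_inf le_rfl (p i).2))
    by_cases hji : j = i
    · subst hji; exact inf_le_left
    · exact ((inf_le_inf_right _ (p j).2).trans (hdisj hji).le_bot).trans bot_le
  map_rel_iff' {x y} := by
    refine ⟨fun h => ?_, fun h i => inf_le_inf_right _ h⟩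
    rw [← hsup x, ← hsup y]
    exact iSup_mono fun i => h i

theorem pairwise_disjoint_centerAtoms
    (hInf : ∀ S : Set L, (∀ a ∈ S, IsCentral a) → IsCentral (sInf S)) :
    Pairwise (Function.onFun Disjoint fun u : {u : L // IsCenterAtom u} => (u : L)) := by
  rintro ⟨u, hu⟩ ⟨v, hv⟩ huv
  have hc : IsCentral (u ⊓ v) := by
    simpa only [sInf_pair] using hInf {u, v} (by rintro a (rfl | rfl); exacts [hu.1, hv.1])
  exact disjoint_iff.2 (hu.inf_eq_bot hv hc fun h => huv (Subtype.ext h))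

theorem eq_bot_of_forall_centerAtom_inf_eq_bot
    (hInf : ∀ S : Set L, (∀ a ∈ S, IsCentral a) → IsCentral (sInf S))
    (hAtic : ∀ a : L, IsCentral a → a = sSup {u : L | IsCenterAtom u ∧ u ≤ a}) {z : L}
    (hz : ∀ u, IsCenterAtom u → z ⊓ u = ⊥) : z = ⊥ := by
  set w := sInf {b : L | ∃ u, IsCenterAtom u ∧ IsCompl u b}
  have hw : IsCentral w := hInf _ fun b ⟨u, hu, hub⟩ => hu.1.1.isCentral_of_isCompl hub
  have hzw : z ≤ w := le_sInf fun b ⟨u, hu, hub⟩ => by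
    have hsplit := hu.1.1.inf_sup_inf_eq hub z
    rw [hz u hu, bot_sup_eq] at hsplit
    exact hsplit ▸ inf_le_right
  -- an atom `v ≤ w` would lie below its own complement
  have hnone : {u : L | IsCenterAtom u ∧ u ≤ w} = ∅ := by
    refine eq_empty_iff_forall_notMem.2 fun v ⟨hv, hvw⟩ => ?_
    obtain ⟨-, b, hvb, hvb'⟩ := hv.1
    have hvb_le : v ≤ b := hvw.trans (sInf_le ⟨v, hv, .of_eq hvb hvb'⟩)
    exact hv.2.1 (le_bot_iff.1 (hvb ▸ le_inf le_rfl hvb_le))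
  rw [hAtic w hw, hnone, sSup_empty] at hzw
  exact le_bot_iff.1 hzw

theorem iSup_inf_centerAtom_eq
    (hSep : ∀ x y : L, ¬x ≤ y → ∃ z : L, ⊥ < z ∧ z ≤ x ∧ z ⊓ y = ⊥)
    (hInf : ∀ S : Set L, (∀ a ∈ S, IsCentral a) → IsCentral (sInf S))
    (hAtic : ∀ a : L, IsCentral a → a = sSup {u : L | IsCenterAtom u ∧ u ≤ a}) (x : L) :
    ⨆ u : {u : L // IsCenterAtom u}, x ⊓ u = x := by
  refine le_antisymm (iSup_le fun _ => inf_le_left) (not_not.1 fun h => ?_)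
  obtain ⟨z, hz, hzx, hzs⟩ := hSep _ _ h
  refine hz.ne' (eq_bot_of_forall_centerAtom_inf_eq_bot hInf hAtic fun u hu => ?_)
  have hzu : z ⊓ u ≤ ⨆ v : {u : L // IsCenterAtom u}, x ⊓ v :=
    le_iSup_of_le (⟨u, hu⟩ : {u : L // IsCenterAtom u}) (inf_le_inf_right u hzx)
  exact le_bot_iff.1 (hzs ▸ le_inf inf_le_left hzu)

end CompleteLattice

/-- A separative complete lattice whose center is a complete atomistic sublattice
satisfies the decomposition equality (J), and hence is totally decomposable. -/
theorem totallyDecomposable_of_separative {L : Type u} [CompleteLattice L]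
    (hSep : ∀ x y : L, ¬x ≤ y → ∃ z : L, ⊥ < z ∧ z ≤ x ∧ z ⊓ y = ⊥)
    (hCpl : ∀ S : Set L, (∀ a ∈ S, IsCentral a) → IsCentral (sSup S) ∧ IsCentral (sInf S))
    (hAtic : ∀ a : L, IsCentral a → a = sSup {u : L | IsCenterAtom u ∧ u ≤ a}) :
    (∀ x : L, x = ⨆ u : {u : L // IsCenterAtom u}, x ⊓ (u : L)) ∧
      TotallyDecomposable L := by
  have hInf : ∀ S : Set L, (∀ a ∈ S, IsCentral a) → IsCentral (sInf S) := fun S hS =>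
    (hCpl S hS).2
  have hJ := iSup_inf_centerAtom_eq hSep hInf hAtic
  refine ⟨fun x => (hJ x).symm, {u : L // IsCenterAtom u}, fun u => BddLat.of (Iic (u : L)),
    fun u => directlyIndecomposable_of_isCentral fun _ =>
      u.2.eq_bot_or_eq_top_of_isCentral,
    ⟨orderIsoPiOfIsCentral _ (fun u => u.2.1) (pairwise_disjoint_centerAtoms hInf) hJ⟩⟩
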